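/- arXiv:2510.19259 — 3 statements merged into one kernel-verified Lean document; each statement's English description precedes it below -/
import Mathlib

section
/- Let I, K ⊆ J ⊆ Π. The set Γ(I,J,K) := Φ_I ∪ (Φ_J⁺ \ Φ_K) is a closed subset of Φ if and only if there exist subsets X, Y ⊆ J such that: (1) I ∪ K = X ∪ Y and X ∩ Y = ∅; (2) X and Y are orthogonal; (3) X ⊇ I \ K and Y ⊇ K \ I. -/
variable {V : Type*} [NormedAddCommGroup V] [InnerProductSpace ℝ V]

/-- `Φ` is a finite reduced crystallographic root system spanning `V`. -/
structure IsRootSystem (Φ : Set V) : Prop where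
  finite : Φ.Finite
  zero_not_mem : (0 : V) ∉ Φ
  span_top : Submodule.span ℝ Φ = ⊤
  reduced : ∀ α ∈ Φ, ∀ c : ℝ, c • α ∈ Φ → c = 1 ∨ c = -1
  crystallographic : ∀ α ∈ Φ, ∀ β ∈ Φ,
    ∃ n : ℤ, 2 * (inner ℝ β α : ℝ) / (inner ℝ α α : ℝ) = (n : ℝ)
  reflect_mem : ∀ α ∈ Φ, ∀ β ∈ Φ,
    β - (2 * (inner ℝ β α : ℝ) / (inner ℝ α α : ℝ)) • α ∈ Φ

/-- `α` is a nonnegative linear combination of elements of `Δ`. -/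
def IsNonnegComb (Δ : Set V) (α : V) : Prop :=
  ∃ c : V →₀ ℝ, (c.support : Set V) ⊆ Δ ∧ (∀ v, 0 ≤ c v) ∧ α = c.sum fun v r => r • v

/-- `Δ` is a base (set of simple roots) of the root system `Φ`. -/
structure IsBase (Φ Δ : Set V) : Prop where
  subset : Δ ⊆ Φ
  indep : LinearIndependent ℝ (Subtype.val : Δ → V)
  pos_or_neg : ∀ α ∈ Φ, IsNonnegComb Δ α ∨ IsNonnegComb Δ (-α)

/-- The set of positive roots with respect to the base `Δ`. -/
def posRoots (Φ Δ : Set V) : Set V := {α ∈ Φ | IsNonnegComb Δ α}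

/-- The set of negative roots with respect to the base `Δ`. -/
def negRoots (Φ Δ : Set V) : Set V := {α ∈ Φ | IsNonnegComb Δ (-α)}

/-- `Φ_A := Φ ∩ span A`. -/
def rootsIn (Φ A : Set V) : Set V := Φ ∩ (Submodule.span ℝ A : Set V)

/-- `Φ_A⁺`. -/
def posRootsIn (Φ Δ A : Set V) : Set V := rootsIn Φ A ∩ posRoots Φ Δ

/-- `Φ_A⁻`. -/
def negRootsIn (Φ Δ A : Set V) : Set V := rootsIn Φ A ∩ negRoots Φ Δ

/-- `Γ` is a closed subset of `Φ`. -/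
def IsClosedSubset (Φ Γ : Set V) : Prop := ∀ α ∈ Γ, ∀ β ∈ Γ, α + β ∈ Φ → α + β ∈ Γ

/-- `X` and `Y` are orthogonal sets of vectors. -/
def OrthogonalSets (X Y : Set V) : Prop := ∀ α ∈ X, ∀ β ∈ Y, (inner ℝ α β : ℝ) = 0

/-!
If `X` and `Y` are as stated, orthogonality splits the roots lying in `span (X ∪ Y)` between
`span X` and `span Y`, and the closedness of `Γ(I,J,K)` follows by a case check. Conversely, if
`Γ(I,J,K)` is closed, take for `X` the union of the connected components of the Dynkin diagram of
`I ∪ K` that meet `I \ K`, and for `Y` the rest. Such a component lies in `I`: otherwise a path from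
some `a ∈ I \ K` leaves `I` at some `ε ∈ K \ I`, the path produces a positive root `σ + ε` with
`σ ∈ Φ_I` and `a` in its support, so `σ + ε ∈ Γ(I,J,K)`, and subtracting simple roots of `I` inside
`Γ(I,J,K)` ends with `ε ∈ Γ(I,J,K)`, which is false since `ε ∈ Φ_K \ Φ_I`.
-/

open Submodule
open scoped RealInnerProductSpace

variable {Φ Δ : Set V}

namespace IsRootSystem

lemma ne_zero (hΦ : IsRootSystem Φ) {α : V} (hα : α ∈ Φ) : α ≠ 0 :=
  fun h => hΦ.zero_not_mem (h ▸ hα)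

lemma inner_self_pos (hΦ : IsRootSystem Φ) {α : V} (hα : α ∈ Φ) : 0 < ⟪α, α⟫ :=
  real_inner_self_pos.mpr (hΦ.ne_zero hα)

lemma sub_smul_mem (hΦ : IsRootSystem Φ) {α β : V} (hα : α ∈ Φ) (hβ : β ∈ Φ) {n : ℝ}
    (h : 2 * ⟪β, α⟫ = n * ⟪α, α⟫) : β - n • α ∈ Φ := by
  have := hΦ.reflect_mem α hα β hβ
  rwa [h, mul_div_cancel_right₀ _ (hΦ.inner_self_pos hα).ne'] at this

lemma neg_mem (hΦ : IsRootSystem Φ) {α : V} (hα : α ∈ Φ) : -α ∈ Φ := by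
  have := hΦ.sub_smul_mem hα hα (n := 2) rfl
  rwa [two_smul, sub_add_cancel_left] at this

lemma inner_mul_inner_lt (hΦ : IsRootSystem Φ) {α β : V} (hα : α ∈ Φ) (hβ : β ∈ Φ)
    (hne : β ≠ α) (hne' : β ≠ -α) : ⟪α, β⟫ * ⟪α, β⟫ < ⟪α, α⟫ * ⟪β, β⟫ := by
  refine (real_inner_mul_inner_self_le α β).lt_of_ne fun heq => ?_
  have hnorm : ‖⟪α, β⟫‖ = ‖α‖ * ‖β‖ := by
    rw [Real.norm_eq_abs, ← sq_eq_sq₀ (abs_nonneg _) (by positivity), sq_abs, mul_pow,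
      ← real_inner_self_eq_norm_sq, ← real_inner_self_eq_norm_sq, sq, heq]
  obtain ⟨r, -, rfl⟩ := (norm_inner_eq_norm_iff (hΦ.ne_zero hα) (hΦ.ne_zero hβ)).mp hnorm
  rcases hΦ.reduced α hα r hβ with rfl | rfl <;> simp_all

/-- The Cartan integers `2⟪β, α⟫/⟪α, α⟫` and `2⟪α, β⟫/⟪β, β⟫` are negative with product `< 4` by
strict Cauchy–Schwarz, so one of them is `-1`, and the corresponding reflection is `α + β`. -/
lemma add_mem_of_inner_neg (hΦ : IsRootSystem Φ) {α β : V} (hα : α ∈ Φ) (hβ : β ∈ Φ)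
    (hne : β ≠ -α) (hneg : ⟪α, β⟫ < 0) : α + β ∈ Φ := by
  have hαα := hΦ.inner_self_pos hα
  have hββ := hΦ.inner_self_pos hβ
  have hβα : ⟪β, α⟫ = ⟪α, β⟫ := real_inner_comm α β
  obtain ⟨m, hm⟩ := hΦ.crystallographic α hα β hβ
  obtain ⟨n, hn⟩ := hΦ.crystallographic β hβ α hα
  have hm0 : m < 0 := by
    have : (m : ℝ) < 0 := by rw [← hm, hβα]; exact div_neg_of_neg_of_pos (by linarith) hαα
    exact_mod_cast this
  have hn0 : n < 0 := by
    have : (n : ℝ) < 0 := by rw [← hn]; exact div_neg_of_neg_of_pos (by linarith) hββ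
    exact_mod_cast this
  have hmn : m * n < 4 := by
    have hlt := hΦ.inner_mul_inner_lt hα hβ (fun h => by rw [h] at hneg; linarith) hne
    have : (m : ℝ) * n < 4 := by
      rw [← hm, ← hn, hβα, div_mul_div_comm, div_lt_iff₀ (by positivity)]
      linarith
    exact_mod_cast this
  obtain hm1 | hn1 : m = -1 ∨ n = -1 := by
    by_contra! h
    nlinarith [show m ≤ -2 by omega, show n ≤ -2 by omega]
  · have := hΦ.reflect_mem α hα β hβ
    rwa [hm, hm1, Int.cast_neg, Int.cast_one, neg_one_smul, sub_neg_eq_add, add_comm] at this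
  · have := hΦ.reflect_mem β hβ α hα
    rwa [hn, hn1, Int.cast_neg, Int.cast_one, neg_one_smul, sub_neg_eq_add] at this

lemma sub_mem_of_inner_pos (hΦ : IsRootSystem Φ) {α β : V} (hα : α ∈ Φ) (hβ : β ∈ Φ)
    (hne : β ≠ α) (hpos : 0 < ⟪α, β⟫) : α - β ∈ Φ := by
  rw [sub_eq_add_neg]
  exact hΦ.add_mem_of_inner_neg hα (hΦ.neg_mem hβ) (by simpa using hne)
    (by rw [inner_neg_right]; linarith)

end IsRootSystem

lemma IsNonnegComb.mem_span {α : V} (h : IsNonnegComb Δ α) : α ∈ span ℝ Δ :=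
  let ⟨c, hc, _, hα⟩ := h
  mem_span_set.mpr ⟨c, hc, hα.symm⟩

namespace IsBase

lemma span_eq_top (hΔ : IsBase Φ Δ) (hΦ : IsRootSystem Φ) : span ℝ Δ = ⊤ := by
  refine eq_top_iff.mpr (hΦ.span_top ▸ span_le.mpr fun α hα => ?_)
  rcases hΔ.pos_or_neg α hα with h | h
  · exact h.mem_span
  · simpa using neg_mem h.mem_span

/-- Coordinates in the basis `Δ`, indexed by `V` itself (zero off `Δ`) to match `IsNonnegComb`. -/
noncomputable def coeffs (hΔ : IsBase Φ Δ) (hΦ : IsRootSystem Φ) : V →ₗ[ℝ] V →₀ ℝ :=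
  Finsupp.lmapDomain ℝ ℝ Subtype.val ∘ₗ
    (Module.Basis.mk hΔ.indep (by simp [hΔ.span_eq_top hΦ])).repr.toLinearMap

section Coordinates

variable (hΔ : IsBase Φ Δ) (hΦ : IsRootSystem Φ)

lemma coeffs_support_subset (x : V) : ↑(hΔ.coeffs hΦ x).support ⊆ Δ := by
  classical
  intro v hv
  obtain ⟨i, -, rfl⟩ := Finset.mem_image.mp (Finsupp.mapDomain_support hv)
  exact i.2

lemma sum_coeffs (x : V) : ((hΔ.coeffs hΦ x).sum fun v r => r • v) = x := by
  rw [← Finsupp.linearCombination_apply, coeffs, LinearMap.comp_apply, Finsupp.lmapDomain_apply,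
    Finsupp.linearCombination_mapDomain]
  have := (Module.Basis.mk hΔ.indep (by simp [hΔ.span_eq_top hΦ])).linearCombination_repr x
  rwa [Module.Basis.coe_mk] at this

lemma coeffs_eq {x : V} {c : V →₀ ℝ} (hc : ↑c.support ⊆ Δ) (hx : (c.sum fun v r => r • v) = x) :
    hΔ.coeffs hΦ x = c := by
  classical
  refine sub_eq_zero.mp (linearIndepOn_iff.mp (show LinearIndepOn ℝ id Δ from hΔ.indep) _ ?_ ?_)
  · rw [Finsupp.mem_supported]
    refine (Finset.coe_subset.mpr Finsupp.support_sub).trans ?_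
    rw [Finset.coe_union]
    exact Set.union_subset (hΔ.coeffs_support_subset hΦ x) hc
  · rw [map_sub, Finsupp.linearCombination_apply, Finsupp.linearCombination_apply]
    simpa [hx] using sub_eq_zero.mpr (hΔ.sum_coeffs hΦ x)

lemma coeffs_simple {δ : V} (hδ : δ ∈ Δ) : hΔ.coeffs hΦ δ = Finsupp.single δ 1 :=
  hΔ.coeffs_eq hΦ (by simpa using hδ) (by simp)

lemma mem_span_iff {S : Set V} (hS : S ⊆ Δ) {x : V} :
    x ∈ span ℝ S ↔ ↑(hΔ.coeffs hΦ x).support ⊆ S := by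
  refine ⟨fun h => ?_, fun h => mem_span_set.mpr ⟨_, h, hΔ.sum_coeffs hΦ x⟩⟩
  obtain ⟨c, hc, hx⟩ := mem_span_set.mp h
  rwa [hΔ.coeffs_eq hΦ (hc.trans hS) hx]

lemma coeff_eq_zero_of_mem_span {S : Set V} (hS : S ⊆ Δ) {x v : V} (hx : x ∈ span ℝ S)
    (hv : v ∉ S) : hΔ.coeffs hΦ x v = 0 :=
  Finsupp.notMem_support_iff.mp fun h => hv ((hΔ.mem_span_iff hΦ hS).mp hx h)

lemma isNonnegComb_iff {x : V} : IsNonnegComb Δ x ↔ ∀ v, 0 ≤ hΔ.coeffs hΦ x v := by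
  refine ⟨fun ⟨c, hc, hnn, hx⟩ => ?_,
    fun h => ⟨_, hΔ.coeffs_support_subset hΦ x, h, (hΔ.sum_coeffs hΦ x).symm⟩⟩
  rwa [hΔ.coeffs_eq hΦ hc hx.symm]

lemma inner_eq_sum_coeffs (x y : V) :
    ⟪x, y⟫ = (hΔ.coeffs hΦ x).sum fun v r => r * ⟪v, y⟫ := by
  conv_lhs => rw [← hΔ.sum_coeffs hΦ x]
  rw [Finsupp.sum_inner]
  simp [real_inner_smul_left]

lemma mem_posRoots_iff {α : V} : α ∈ posRoots Φ Δ ↔ α ∈ Φ ∧ ∀ v, 0 ≤ hΔ.coeffs hΦ α v :=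
  and_congr_right' (hΔ.isNonnegComb_iff hΦ)

lemma coeffs_nonneg_or_nonpos {α : V} (hα : α ∈ Φ) :
    (∀ v, 0 ≤ hΔ.coeffs hΦ α v) ∨ ∀ v, hΔ.coeffs hΦ α v ≤ 0 :=
  (hΔ.pos_or_neg α hα).imp (hΔ.isNonnegComb_iff hΦ).mp fun h v => by
    simpa using (hΔ.isNonnegComb_iff hΦ).mp h v

lemma mem_posRoots_of_coeff_pos {α v : V} (hα : α ∈ Φ) (hv : 0 < hΔ.coeffs hΦ α v) :
    α ∈ posRoots Φ Δ :=
  (hΔ.mem_posRoots_iff hΦ).mpr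
    ⟨hα, (hΔ.coeffs_nonneg_or_nonpos hΦ hα).resolve_right fun h => (h v).not_gt hv⟩

end Coordinates

lemma mem_of_mem_span (hΔ : IsBase Φ Δ) (hΦ : IsRootSystem Φ) {S : Set V} (hS : S ⊆ Δ) {δ : V}
    (hδ : δ ∈ Δ) (h : δ ∈ span ℝ S) : δ ∈ S := by
  simpa [hΔ.coeffs_simple hΦ hδ] using (hΔ.mem_span_iff hΦ hS).mp h

lemma simple_mem_posRoots (hΔ : IsBase Φ Δ) {δ : V} (hδ : δ ∈ Δ) : δ ∈ posRoots Φ Δ :=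
  ⟨hΔ.subset hδ, Finsupp.single δ 1, by simpa using hδ, fun v => by
    classical
    rw [Finsupp.single_apply]; split_ifs <;> norm_num, by simp⟩

lemma isNonnegComb_add (hΔ : IsBase Φ Δ) (hΦ : IsRootSystem Φ) {α β : V}
    (hα : IsNonnegComb Δ α) (hβ : IsNonnegComb Δ β) : IsNonnegComb Δ (α + β) := by
  rw [hΔ.isNonnegComb_iff hΦ] at *
  intro v
  simpa using add_nonneg (hα v) (hβ v)

lemma neg_notMem_posRoots (hΔ : IsBase Φ Δ) (hΦ : IsRootSystem Φ) {α : V}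
    (hα : α ∈ posRoots Φ Δ) : -α ∉ posRoots Φ Δ := by
  intro hnα
  have hzero : hΔ.coeffs hΦ α = 0 := by
    ext v
    rw [Finsupp.coe_zero, Pi.zero_apply]
    have := ((hΔ.mem_posRoots_iff hΦ).mp hnα).2 v
    simp only [map_neg, Finsupp.coe_neg, Pi.neg_apply] at this
    exact le_antisymm (by linarith) (((hΔ.mem_posRoots_iff hΦ).mp hα).2 v)
  apply hΦ.ne_zero hα.1
  rw [← hΔ.sum_coeffs hΦ α, hzero, Finsupp.sum_zero_index]

lemma mem_span_of_add_mem_span (hΔ : IsBase Φ Δ) (hΦ : IsRootSystem Φ) {S : Set V} (hS : S ⊆ Δ)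
    {α β : V} (hα : IsNonnegComb Δ α) (hβ : IsNonnegComb Δ β) (h : α + β ∈ span ℝ S) :
    α ∈ span ℝ S := by
  rw [hΔ.isNonnegComb_iff hΦ] at hα hβ
  refine (hΔ.mem_span_iff hΦ hS).mpr fun v hv => by_contra fun hvS => ?_
  have := hΔ.coeff_eq_zero_of_mem_span hΦ hS h hvS
  rw [map_add, Finsupp.add_apply] at this
  exact Finsupp.mem_support_iff.mp hv (by linarith [hα v, hβ v])

lemma add_mem_posRoots_of_notMem_span (hΔ : IsBase Φ Δ) (hΦ : IsRootSystem Φ) {S : Set V}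
    (hS : S ⊆ Δ) {α β : V} (hα : α ∈ span ℝ S) (hβ : IsNonnegComb Δ β) (hαβ : α + β ∈ Φ)
    (h : α + β ∉ span ℝ S) : α + β ∈ posRoots Φ Δ := by
  obtain ⟨v, hv, hvS⟩ := Set.not_subset.mp (mt (hΔ.mem_span_iff hΦ hS).mpr h)
  have hcoeff : hΔ.coeffs hΦ (α + β) v = hΔ.coeffs hΦ β v := by
    rw [map_add, Finsupp.add_apply, hΔ.coeff_eq_zero_of_mem_span hΦ hS hα hvS, zero_add]
  refine hΔ.mem_posRoots_of_coeff_pos hΦ hαβ (v := v) (lt_of_le_of_ne ?_ (Ne.symm ?_))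
  · exact hcoeff ▸ (hΔ.isNonnegComb_iff hΦ).mp hβ v
  · exact Finsupp.mem_support_iff.mp hv

/-- If `γ - δ` were negative, `γ + (δ - γ) = δ` would force `γ ∈ ℝ ∙ δ`, hence `γ = δ` by
reducedness. -/
lemma sub_simple_mem_posRoots (hΔ : IsBase Φ Δ) (hΦ : IsRootSystem Φ) {γ δ : V}
    (hγ : γ ∈ posRoots Φ Δ) (hδ : δ ∈ Δ) (hne : γ ≠ δ) (hmem : γ - δ ∈ Φ) :
    γ - δ ∈ posRoots Φ Δ := by
  refine ⟨hmem, (hΔ.pos_or_neg _ hmem).resolve_right fun h => ?_⟩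
  have hγδ : γ ∈ span ℝ {δ} := hΔ.mem_span_of_add_mem_span hΦ (Set.singleton_subset_iff.mpr hδ)
    hγ.2 (by simpa using h) (by simp)
  obtain ⟨a, rfl⟩ := mem_span_singleton.mp hγδ
  rcases hΦ.reduced δ (hΔ.subset hδ) a hγ.1 with rfl | rfl
  · exact hne (one_smul ℝ δ)
  · exact hΔ.neg_notMem_posRoots hΦ (hΔ.simple_mem_posRoots hδ) (by simpa using hγ)

lemma inner_simple_nonpos (hΔ : IsBase Φ Δ) (hΦ : IsRootSystem Φ) {δ ε : V} (hδ : δ ∈ Δ)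
    (hε : ε ∈ Δ) (hne : δ ≠ ε) : ⟪δ, ε⟫ ≤ 0 := by
  by_contra! h
  have hpos := hΔ.sub_simple_mem_posRoots hΦ (hΔ.simple_mem_posRoots hδ) hε hne
    (hΦ.sub_mem_of_inner_pos (hΔ.subset hδ) (hΔ.subset hε) hne.symm h)
  have := ((hΔ.mem_posRoots_iff hΦ).mp hpos).2 ε
  norm_num [hΔ.coeffs_simple hΦ hδ, hΔ.coeffs_simple hΦ hε, hne] at this

lemma exists_inner_pos (hΔ : IsBase Φ Δ) (hΦ : IsRootSystem Φ) {S : Set V} (hS : S ⊆ Δ) {γ : V}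
    (hγ : γ ∈ posRoots Φ Δ) (hγS : γ ∈ span ℝ S) : ∃ δ ∈ S, 0 < ⟪γ, δ⟫ := by
  by_contra! h
  refine (hΦ.inner_self_pos hγ.1).not_ge ?_
  rw [hΔ.inner_eq_sum_coeffs hΦ]
  refine Finset.sum_nonpos fun v hv => mul_nonpos_of_nonneg_of_nonpos
    (((hΔ.mem_posRoots_iff hΦ).mp hγ).2 v) ?_
  rw [real_inner_comm]
  exact h v ((hΔ.mem_span_iff hΦ hS).mp hγS hv)

lemma inner_neg_of_coeff_pos (hΔ : IsBase Φ Δ) (hΦ : IsRootSystem Φ) {σ δ ε : V}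
    (hσ : IsNonnegComb Δ σ) (hε : ε ∈ Δ) (hσε : hΔ.coeffs hΦ σ ε = 0)
    (hσδ : 0 < hΔ.coeffs hΦ σ δ) (hδε : ⟪δ, ε⟫ < 0) : ⟪σ, ε⟫ < 0 := by
  rw [hΔ.isNonnegComb_iff hΦ] at hσ
  rw [hΔ.inner_eq_sum_coeffs hΦ]
  refine Finset.sum_neg' (fun v hv => mul_nonpos_of_nonneg_of_nonpos (hσ v) ?_)
    ⟨δ, Finsupp.mem_support_iff.mpr hσδ.ne', mul_neg_of_pos_of_neg hσδ hδε⟩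
  exact hΔ.inner_simple_nonpos hΦ (hΔ.coeffs_support_subset hΦ σ hv) hε
    (by rintro rfl; exact Finsupp.mem_support_iff.mp hv hσε)

@[elab_as_elim]
theorem posRoots_induction (hΔ : IsBase Φ Δ) (hΦ : IsRootSystem Φ) {P : V → Prop}
    (step : ∀ γ ∈ posRoots Φ Δ, (∀ δ ∈ Δ, γ - δ ∈ posRoots Φ Δ → P (γ - δ)) → P γ)
    {γ : V} (hγ : γ ∈ posRoots Φ Δ) : P γ := by
  let height : V →ₗ[ℝ] ℝ := Finsupp.linearCombination ℝ (fun _ => 1) ∘ₗ hΔ.coeffs hΦ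
  have height_simple : ∀ δ ∈ Δ, height δ = 1 := fun δ hδ => by
    simp [height, hΔ.coeffs_simple hΦ hδ]
  have height_nonneg : ∀ γ ∈ posRoots Φ Δ, 0 ≤ height γ := fun γ hγ => by
    simp only [height, LinearMap.comp_apply, Finsupp.linearCombination_apply, smul_eq_mul,
      mul_one]
    exact Finset.sum_nonneg fun v _ => ((hΔ.mem_posRoots_iff hΦ).mp hγ).2 v
  suffices ∀ n : ℕ, ∀ γ ∈ posRoots Φ Δ, height γ < n → P γ from
    let ⟨n, hn⟩ := exists_nat_gt (height γ); this n γ hγ hn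
  intro n
  induction n with
  | zero => exact fun γ hγ h => absurd h (not_lt.mpr (by exact_mod_cast height_nonneg γ hγ))
  | succ n ih =>
    refine fun γ hγ h => step γ hγ fun δ hδ hγδ => ih _ hγδ ?_
    rw [map_sub, height_simple δ hδ]
    push_cast at h
    linarith

/-- Reflecting `β + δ` in `δ` would give the root `β - δ`, which has coefficient `-1` at `δ` and
nonnegative coefficients elsewhere. -/
lemma add_simple_notMem (hΔ : IsBase Φ Δ) (hΦ : IsRootSystem Φ) {β δ : V}
    (hβ : β ∈ posRoots Φ Δ) (hδ : δ ∈ Δ) (hβδ : ⟪β, δ⟫ = 0) (hcoeff : hΔ.coeffs hΦ β δ = 0) :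
    β + δ ∉ Φ := by
  intro hmem
  have hδΦ := hΔ.subset hδ
  have hrefl : β + δ - (2 : ℝ) • δ ∈ Φ :=
    hΦ.sub_smul_mem hδΦ hmem (by rw [inner_add_left, hβδ]; ring)
  rw [two_smul, add_sub_add_right_eq_sub] at hrefl
  have hne : β ≠ δ := by
    rintro rfl
    simp [hΔ.coeffs_simple hΦ hδ] at hcoeff
  have := ((hΔ.mem_posRoots_iff hΦ).mp (hΔ.sub_simple_mem_posRoots hΦ hβ hδ hne hrefl)).2 δ
  norm_num [hcoeff, hΔ.coeffs_simple hΦ hδ] at this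

lemma posRoot_mem_span_or_mem_span (hΔ : IsBase Φ Δ) (hΦ : IsRootSystem Φ) {γ : V}
    (hγ : γ ∈ posRoots Φ Δ) : ∀ X Y : Set V, X ⊆ Δ → Y ⊆ Δ → OrthogonalSets X Y →
      γ ∈ span ℝ (X ∪ Y) → γ ∈ span ℝ X ∨ γ ∈ span ℝ Y := by
  refine hΔ.posRoots_induction hΦ (fun γ hγ ih X Y hX hY hXY hγXY => ?_) hγ
  obtain ⟨δ, hδXY, hγδ⟩ := hΔ.exists_inner_pos hΦ (Set.union_subset hX hY) hγ hγXY
  wlog hδX : δ ∈ X generalizing X Y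
  · have hδY : δ ∈ Y := hδXY.resolve_left hδX
    exact (this Y X hY hX (fun a ha b hb => by rw [real_inner_comm]; exact hXY b hb a ha)
      (Set.union_comm X Y ▸ hγXY) (Or.inl hδY) hδY).symm
  have hδ : δ ∈ Δ := hX hδX
  by_cases hγδ' : γ = δ
  · exact Or.inl (hγδ' ▸ subset_span hδX)
  have hsub := hΔ.sub_simple_mem_posRoots hΦ hγ hδ hγδ'
    (hΦ.sub_mem_of_inner_pos hγ.1 (hΔ.subset hδ) (Ne.symm hγδ') hγδ)
  rcases ih δ hδ hsub X Y hX hY hXY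
      (sub_mem hγXY (span_mono Set.subset_union_left (subset_span hδX))) with h | h
  · exact Or.inl (by simpa using add_mem h (subset_span hδX))
  · exfalso
    have hδY : δ ∉ Y := fun hδY => (hΦ.inner_self_pos (hΔ.subset hδ)).ne' (hXY δ hδX δ hδY)
    have horth : ⟪γ - δ, δ⟫ = 0 := by
      rw [real_inner_comm]
      exact mem_orthogonal_singleton_iff_inner_right.mp
        (span_le.mpr (fun y hy => mem_orthogonal_singleton_iff_inner_right.mpr (hXY δ hδX y hy)) h)
    exact hΔ.add_simple_notMem hΦ hsub hδ horth (hΔ.coeff_eq_zero_of_mem_span hΦ hY h hδY)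
      (by simpa using hγ.1)

theorem mem_span_or_mem_span_of_orthogonal (hΔ : IsBase Φ Δ) (hΦ : IsRootSystem Φ) {X Y : Set V}
    (hX : X ⊆ Δ) (hY : Y ⊆ Δ) (hXY : OrthogonalSets X Y) {γ : V} (hγ : γ ∈ Φ)
    (hγXY : γ ∈ span ℝ (X ∪ Y)) : γ ∈ span ℝ X ∨ γ ∈ span ℝ Y := by
  rcases hΔ.pos_or_neg γ hγ with h | h
  · exact hΔ.posRoot_mem_span_or_mem_span hΦ ⟨hγ, h⟩ X Y hX hY hXY hγXY
  · simpa using hΔ.posRoot_mem_span_or_mem_span hΦ ⟨hΦ.neg_mem hγ, h⟩ X Y hX hY hXY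
      (neg_mem hγXY)

end IsBase

/-- `Γ(I,J,K) := Φ_I ∪ (Φ_J⁺ \ Φ_K)`. -/
def gammaSet (Φ Δ I J K : Set V) : Set V := rootsIn Φ I ∪ (posRootsIn Φ Δ J \ rootsIn Φ K)

namespace IsBase

/-- Strip the simple roots of `I` off `γ` one at a time, staying in `Γ` by closedness, until
`γ - ε` is a root of `Φ_I`; then `ε = γ - (γ - ε) ∈ Γ`. -/
lemma mem_of_sub_mem_span (hΔ : IsBase Φ Δ) (hΦ : IsRootSystem Φ) {Γ I : Set V} (hI : I ⊆ Δ)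
    (hΓ : IsClosedSubset Φ Γ) (hIΓ : rootsIn Φ I ⊆ Γ) {ε γ : V} (hε : ε ∈ Δ)
    (hγ : γ ∈ posRoots Φ Δ) : γ ∈ Γ → γ - ε ∈ span ℝ I → ε ∈ Γ := by
  refine hΔ.posRoots_induction hΦ (fun γ hγ ih hγΓ hγε => ?_) hγ
  have hγεI : γ ∈ span ℝ (insert ε I) := by
    simpa using add_mem (span_mono (Set.subset_insert ε I) hγε) (subset_span (Set.mem_insert ε I))
  obtain ⟨δ, hδ, hγδ⟩ := hΔ.exists_inner_pos hΦ (Set.insert_subset hε hI) hγ hγεI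
  rcases hδ with rfl | hδI
  · by_cases hγδ' : γ = δ
    · exact hγδ' ▸ hγΓ
    have hsub := hΦ.sub_mem_of_inner_pos hγ.1 (hΔ.subset hε) (Ne.symm hγδ') hγδ
    simpa using hΓ γ hγΓ _ (hIΓ ⟨hΦ.neg_mem hsub, neg_mem hγε⟩) (by simpa using hΔ.subset hε)
  · by_cases hγδ' : γ = δ
    · subst hγδ'
      exact hIΓ ⟨hΔ.subset hε, by simpa using sub_mem (subset_span hδI) hγε⟩
    have hsub := hΔ.sub_simple_mem_posRoots hΦ hγ (hI hδI) hγδ'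
      (hΦ.sub_mem_of_inner_pos hγ.1 (hΔ.subset (hI hδI)) (Ne.symm hγδ') hγδ)
    refine ih δ (hI hδI) hsub ?_ ?_
    · simpa [sub_eq_add_neg] using hΓ γ hγΓ _
        (hIΓ ⟨hΦ.neg_mem (hΔ.subset (hI hδI)), neg_mem (subset_span hδI)⟩)
        (by simpa [sub_eq_add_neg] using hsub.1)
    · simpa [sub_right_comm] using sub_mem hγε (subset_span hδI)

/-- Along the path keep a positive root `σ ∈ Φ_I` whose support contains `a` and the current
vertex. A step to a simple root `ε` outside the support yields the root `σ + ε`. If `ε ∉ I`, then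
`σ + ε ∈ Γ(I,J,K)`, its `a`-coefficient keeping it out of `Φ_K`, and `mem_of_sub_mem_span` would put
`ε ∈ Φ_K \ Φ_I` into `Γ(I,J,K)`. -/
lemma mem_of_reflTransGen (hΔ : IsBase Φ Δ) (hΦ : IsRootSystem Φ) {I J K : Set V} (hJΔ : J ⊆ Δ)
    (hIJ : I ⊆ J) (hKJ : K ⊆ J) (hΓ : IsClosedSubset Φ (gammaSet Φ Δ I J K)) {a b : V}
    (ha : a ∈ I \ K) (hab : Relation.ReflTransGen (fun x y => y ∈ I ∪ K ∧ ⟪x, y⟫ ≠ 0) a b) :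
    b ∈ I := by
  have hIΔ := hIJ.trans hJΔ
  have hKΔ := hKJ.trans hJΔ
  suffices ∃ σ ∈ posRoots Φ Δ, σ ∈ span ℝ I ∧ 0 < hΔ.coeffs hΦ σ a ∧ 0 < hΔ.coeffs hΦ σ b by
    obtain ⟨σ, -, hσI, -, hσb⟩ := this
    exact (hΔ.mem_span_iff hΦ hIΔ).mp hσI (Finsupp.mem_support_iff.mpr hσb.ne')
  induction hab with
  | refl =>
    exact ⟨a, hΔ.simple_mem_posRoots (hIΔ ha.1), subset_span ha.1,
      by simp [hΔ.coeffs_simple hΦ (hIΔ ha.1)], by simp [hΔ.coeffs_simple hΦ (hIΔ ha.1)]⟩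
  | @tail δ ε _ hstep ih =>
    obtain ⟨hεIK, hδε⟩ := hstep
    obtain ⟨σ, hσ, hσI, hσa, hσδ⟩ := ih
    have hε : ε ∈ Δ := Set.union_subset hIΔ hKΔ hεIK
    rcases (((hΔ.mem_posRoots_iff hΦ).mp hσ).2 ε).lt_or_eq with hσε | hσε
    · exact ⟨σ, hσ, hσI, hσa, hσε⟩
    have hδ : δ ∈ Δ := hΔ.coeffs_support_subset hΦ σ (Finsupp.mem_support_iff.mpr hσδ.ne')
    have hδε' : ⟪δ, ε⟫ < 0 :=
      (hΔ.inner_simple_nonpos hΦ hδ hε (by rintro rfl; linarith)).lt_of_ne hδε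
    have hτ : σ + ε ∈ Φ := hΦ.add_mem_of_inner_neg hσ.1 (hΔ.subset hε)
      (fun h => hΔ.neg_notMem_posRoots hΦ hσ (h ▸ hΔ.simple_mem_posRoots hε))
      (hΔ.inner_neg_of_coeff_pos hΦ hσ.2 hε hσε.symm hσδ hδε')
    have hτpos : σ + ε ∈ posRoots Φ Δ :=
      ⟨hτ, hΔ.isNonnegComb_add hΦ hσ.2 (hΔ.simple_mem_posRoots hε).2⟩
    have hτa : hΔ.coeffs hΦ (σ + ε) a = hΔ.coeffs hΦ σ a := by
      have haε : a ≠ ε := by rintro rfl; linarith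
      simp [hΔ.coeffs_simple hΦ hε, haε.symm]
    by_cases hεI : ε ∈ I
    · exact ⟨σ + ε, hτpos, add_mem hσI (subset_span hεI), hτa ▸ hσa,
        by simp [hΔ.coeffs_simple hΦ hε, ← hσε]⟩
    exfalso
    have hεK : ε ∈ K := hεIK.resolve_left hεI
    have hτΓ : σ + ε ∈ gammaSet Φ Δ I J K :=
      Or.inr ⟨⟨⟨hτ, add_mem (span_mono hIJ hσI) (subset_span (hKJ hεK))⟩, hτpos⟩, fun hτK => by
        have := hΔ.coeff_eq_zero_of_mem_span hΦ hKΔ hτK.2 ha.2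
        linarith⟩
    rcases hΔ.mem_of_sub_mem_span hΦ hIΔ hΓ Set.subset_union_left hε hτpos hτΓ (by simpa using hσI)
      with h | h
    · exact hεI (hΔ.mem_of_mem_span hΦ hIΔ hε h.2)
    · exact h.2 ⟨hΔ.subset hε, subset_span hεK⟩

theorem isClosedSubset_gammaSet (hΔ : IsBase Φ Δ) (hΦ : IsRootSystem Φ) {I J K X Y : Set V}
    (hJΔ : J ⊆ Δ) (hIJ : I ⊆ J) (hKΔ : K ⊆ Δ) (hXI : X ⊆ I) (hYK : Y ⊆ K) (hIK : I ∪ K ⊆ X ∪ Y)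
    (hXY : OrthogonalSets X Y) : IsClosedSubset Φ (gammaSet Φ Δ I J K) := by
  have hIΔ := hIJ.trans hJΔ
  have split : ∀ γ ∈ Φ, γ ∈ span ℝ (I ∪ K) → γ ∈ span ℝ I ∨ γ ∈ span ℝ Y := fun γ hγ hγIK =>
    (hΔ.mem_span_or_mem_span_of_orthogonal hΦ (hXI.trans hIΔ) (hYK.trans hKΔ) hXY hγ
      (span_mono hIK hγIK)).imp_left (span_mono hXI ·)
  have mixed : ∀ α ∈ rootsIn Φ I, ∀ β ∈ posRootsIn Φ Δ J \ rootsIn Φ K, α + β ∈ Φ →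
      α + β ∈ gammaSet Φ Δ I J K := by
    rintro α ⟨-, hαI⟩ β ⟨⟨⟨hβ, hβJ⟩, -, hβpos⟩, hβK⟩ hαβ
    by_cases hαβI : α + β ∈ span ℝ I
    · exact Or.inl ⟨hαβ, hαβI⟩
    refine Or.inr ⟨⟨⟨hαβ, add_mem (span_mono hIJ hαI) hβJ⟩,
      hΔ.add_mem_posRoots_of_notMem_span hΦ hIΔ hαI hβpos hαβ hαβI⟩, fun ⟨_, hαβK⟩ => ?_⟩
    have hβIK : β ∈ span ℝ (I ∪ K) := by
      simpa using
        sub_mem (span_mono Set.subset_union_right hαβK) (span_mono Set.subset_union_left hαI)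
    rcases split β hβ hβIK with h | h
    · exact hαβI (add_mem hαI h)
    · exact hβK ⟨hβ, span_mono hYK h⟩
  rintro α (hα | hα) β (hβ | hβ) hαβ
  · exact Or.inl ⟨hαβ, add_mem hα.2 hβ.2⟩
  · exact mixed α hα β hβ hαβ
  · rw [add_comm] at hαβ ⊢
    exact mixed β hβ α hα hαβ
  obtain ⟨⟨⟨hα, hαJ⟩, hαpos⟩, hαK⟩ := hα
  obtain ⟨⟨⟨-, hβJ⟩, hβpos⟩, -⟩ := hβ
  by_cases hαβK : α + β ∈ span ℝ K
  · rcases split _ hαβ (span_mono Set.subset_union_right hαβK) with h | h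
    · exact Or.inl ⟨hαβ, h⟩
    · exact absurd ⟨hα, span_mono hYK
        (hΔ.mem_span_of_add_mem_span hΦ (hYK.trans hKΔ) hαpos.2 hβpos.2 h)⟩ hαK
  · exact Or.inr ⟨⟨⟨hαβ, add_mem hαJ hβJ⟩, hαβ, hΔ.isNonnegComb_add hΦ hαpos.2 hβpos.2⟩,
      fun h => hαβK h.2⟩

end IsBase

/-- For `I, K ⊆ J ⊆ Π`, the set `Γ(I,J,K) := Φ_I ∪ (Φ_J⁺ \ Φ_K)` is a closed
subset of `Φ` if and only if there exist `X, Y ⊆ J` with `I ∪ K = X ⊔ Y`, `X ⊥ Y`,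
`X ⊇ I \ K` and `Y ⊇ K \ I`. -/
theorem statement0 (Φ Δ : Set V) (hΦ : IsRootSystem Φ) (hΔ : IsBase Φ Δ)
    (I J K : Set V) (hJΔ : J ⊆ Δ) (hIJ : I ⊆ J) (hKJ : K ⊆ J) :
    IsClosedSubset Φ (rootsIn Φ I ∪ (posRootsIn Φ Δ J \ rootsIn Φ K)) ↔
      ∃ X Y : Set V, X ⊆ J ∧ Y ⊆ J ∧ I ∪ K = X ∪ Y ∧ X ∩ Y = ∅ ∧
        OrthogonalSets X Y ∧ I \ K ⊆ X ∧ K \ I ⊆ Y := by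
  constructor
  · intro hΓ
    -- `X` is the union of the components of the Dynkin diagram of `I ∪ K` that meet `I \ K`.
    let X := {b | ∃ a ∈ I \ K, Relation.ReflTransGen (fun x y => y ∈ I ∪ K ∧ ⟪x, y⟫ ≠ 0) a b}
    have hXI : X ⊆ I := fun b ⟨a, ha, hab⟩ => hΔ.mem_of_reflTransGen hΦ hJΔ hIJ hKJ hΓ ha hab
    refine ⟨X, (I ∪ K) \ X, hXI.trans hIJ, Set.sdiff_subset.trans (Set.union_subset hIJ hKJ),
      (Set.union_sdiff_cancel (hXI.trans Set.subset_union_left)).symm, Set.inter_sdiff_self _ _,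
      fun x ⟨a, ha, hax⟩ y hy => by_contra fun hxy => hy.2 ⟨a, ha, hax.tail ⟨hy.1, hxy⟩⟩,
      fun a ha => ⟨a, ha, .refl⟩, fun b hb => ⟨Or.inr hb.1, fun hbX => hb.2 (hXI hbX)⟩⟩
  · rintro ⟨X, Y, -, -, hIK, hXY, horth, hX, hY⟩
    have hXI : X ⊆ I := fun x hx => by_contra fun hxI => hXY.subset
      ⟨hx, hY ⟨(hIK.symm.subset (Or.inl hx)).resolve_left hxI, hxI⟩⟩
    have hYK : Y ⊆ K := fun y hy => by_contra fun hyK => hXY.subset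
      ⟨hX ⟨(hIK.symm.subset (Or.inr hy)).resolve_right hyK, hyK⟩, hy⟩
    exact hΔ.isClosedSubset_gammaSet hΦ hJΔ hIJ (hKJ.trans hJΔ) hXI hYK hIK.le horth
end

section
/- Let g be a finite-dimensional complex semisimple Lie algebra with Killing form κ, let (e,h,f) be an sl₂-triple in g, and let l ⊆ g₋₁ be a subspace that is isotropic for the form (x,y) ↦ κ([x,y],e) (for instance a Lagrangian subspace). Set u_e := l + Σ_{k ≤ −2} g_k (the sum of l with all eigenspaces of ad(h) of eigenvalue at most −2). Then κ(e, [x,y]) = 0 for all x, y ∈ u_e; that is, the linear functional χ_e := κ(e, ·) vanishes on the derived subalgebra [u_e, u_e]. -/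
set_option linter.unusedSectionVars false
set_option linter.unusedVariables false

section aux
variable {L : Type*} [LieRing L] [LieAlgebra ℂ L] [Module.Finite ℂ L]

/-- Elementary orthogonality: the bracket of eigenvectors is an eigenvector, and
`κ e ·` kills eigenvectors of eigenvalue `≠ -2` when `e` has eigenvalue `2`. -/
lemma stmt15_aux (h e : L) (hhe : ⁅h, e⁆ = (2 : ℂ) • e)
    {a b : ℂ} {x y : L}
    (hx : x ∈ Module.End.eigenspace (LieAlgebra.ad ℂ L h) a)
    (hy : y ∈ Module.End.eigenspace (LieAlgebra.ad ℂ L h) b)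
    (hab : a + b ≠ -2) :
    killingForm ℂ L e ⁅x, y⁆ = 0 := by
  rw [Module.End.mem_eigenspace_iff] at hx hy
  simp only [LieAlgebra.ad_apply] at hx hy
  have hz : ⁅h, ⁅x, y⁆⁆ = (a + b) • ⁅x, y⁆ := by
    rw [leibniz_lie, hx, hy, smul_lie, lie_smul, add_smul]
  have key : (2 + (a + b)) * killingForm ℂ L e ⁅x, y⁆ = 0 := by
    have h1 : killingForm ℂ L ⁅h, e⁆ ⁅x, y⁆ =
        - killingForm ℂ L e ⁅h, ⁅x, y⁆⁆ := by
      rw [LieModule.traceForm_apply_lie_apply' ℂ L L]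
    rw [hhe, hz] at h1
    simp only [map_smul, LinearMap.smul_apply, smul_eq_mul] at h1
    linear_combination h1
  have : (2 : ℂ) + (a + b) ≠ 0 := by
    intro hc; apply hab; linear_combination hc
  exact (mul_eq_zero.mp key).resolve_left this

end aux


/-- Let `g` be a finite-dimensional complex semisimple Lie algebra with
Killing form `κ`, let `(e,h,f)` be an `sl₂`-triple in `g`, and let `l ⊆ g₋₁` be a subspace
isotropic for the form `(x,y) ↦ κ(⁅x,y⁆,e)`.  Set `u_e := l + Σ_{k ≤ −2} g_k`.  Then
`κ(e, ⁅x,y⁆) = 0` for all `x, y ∈ u_e`, i.e. the functional `χ_e := κ(e, ·)` vanishes on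
`[u_e, u_e]`. -/
theorem statement15 {L : Type*} [LieRing L] [LieAlgebra ℂ L] [Module.Finite ℂ L]
    [LieAlgebra.IsSemisimple ℂ L]
    (e h f : L) (he : e ≠ 0) (hef : ⁅e, f⁆ = h)
    (hhe : ⁅h, e⁆ = (2 : ℂ) • e) (hhf : ⁅h, f⁆ = (-2 : ℂ) • f)
    (l : Submodule ℂ L)
    (hl : l ≤ Module.End.eigenspace (LieAlgebra.ad ℂ L h) (-1))
    (hiso : ∀ x ∈ l, ∀ y ∈ l, killingForm ℂ L ⁅x, y⁆ e = 0) :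
    ∀ x ∈ (l ⊔ ⨆ (k : ℤ) (_ : k ≤ -2),
        Module.End.eigenspace (LieAlgebra.ad ℂ L h) (k : ℂ)),
      ∀ y ∈ (l ⊔ ⨆ (k : ℤ) (_ : k ≤ -2),
        Module.End.eigenspace (LieAlgebra.ad ℂ L h) (k : ℂ)),
        killingForm ℂ L e ⁅x, y⁆ = 0 := by
  set S : Submodule ℂ L := ⨆ (k : ℤ) (_ : k ≤ -2),
      Module.End.eigenspace (LieAlgebra.ad ℂ L h) (k : ℂ) with hS
  -- Step 1: if `y` is an eigenvector whose eigenvalue `b` satisfies `k + b ≠ -2`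
  -- for all `k ≤ -2`, then `κ e ⁅x, y⁆ = 0` for all `x ∈ S`.
  have step1 : ∀ (b : ℂ), (∀ k : ℤ, k ≤ -2 → (k : ℂ) + b ≠ -2) →
      ∀ y ∈ Module.End.eigenspace (LieAlgebra.ad ℂ L h) b,
      ∀ x ∈ S, killingForm ℂ L e ⁅x, y⁆ = 0 := by
    intro b hb y hy x hx
    have hle : S ≤ LinearMap.ker
        ((killingForm ℂ L e).comp ((LieAlgebra.ad ℂ L y).comp (-LinearMap.id))) := by
      refine iSup_le fun k => iSup_le fun hk => fun z hz => ?_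
      simp only [LinearMap.mem_ker, LinearMap.comp_apply, LinearMap.neg_apply,
        LinearMap.id_apply, LieAlgebra.ad_apply, lie_neg, map_neg, neg_eq_zero]
      rw [← lie_skew y z, map_neg, stmt15_aux h e hhe hz hy (hb k hk), neg_zero]
    have := hle hx
    simpa only [LinearMap.mem_ker, LinearMap.comp_apply, LinearMap.neg_apply,
      LinearMap.id_apply, map_neg, LieAlgebra.ad_apply, lie_neg, neg_neg,
      ← lie_skew x y, map_neg, neg_eq_zero] using this
  have hm1 : ∀ k : ℤ, k ≤ -2 → (k : ℂ) + (-1) ≠ -2 := by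
    intro k hk hc
    have : ((k : ℂ)) = ((-1 : ℤ) : ℂ) := by push_cast; linear_combination hc
    have := Int.cast_injective (α := ℂ) this
    omega
  -- Step 2: brackets of two elements of `S` are killed.
  have step2 : ∀ x ∈ S, ∀ y ∈ S, killingForm ℂ L e ⁅x, y⁆ = 0 := by
    intro x hx y hy
    have hle : S ≤ LinearMap.ker
        ((killingForm ℂ L e).comp (LieAlgebra.ad ℂ L x)) := by
      refine iSup_le fun k => iSup_le fun hk => fun z hz => ?_
      simp only [LinearMap.mem_ker, LinearMap.comp_apply, LieAlgebra.ad_apply]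
      refine step1 (k : ℂ) (fun k' hk' hc => ?_) z hz x hx
      have : ((k' + k : ℤ) : ℂ) = ((-2 : ℤ) : ℂ) := by push_cast; linear_combination hc
      have := Int.cast_injective (α := ℂ) this
      omega
    simpa only [LinearMap.mem_ker, LinearMap.comp_apply, LieAlgebra.ad_apply] using hle hy
  intro x hx y hy
  rw [Submodule.mem_sup] at hx hy
  obtain ⟨a, ha, b, hb, rfl⟩ := hx
  obtain ⟨c, hc, d, hd, rfl⟩ := hy
  have t1 : killingForm ℂ L e ⁅a, c⁆ = 0 := by
    rw [LieModule.traceForm_comm ℂ L L]; exact hiso a ha c hc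
  have t2 : killingForm ℂ L e ⁅a, d⁆ = 0 := by
    have := step1 (-1) hm1 a (hl ha) d hd
    rw [← lie_skew a d, map_neg, this, neg_zero]
  have t3 : killingForm ℂ L e ⁅b, c⁆ = 0 := step1 (-1) hm1 c (hl hc) b hb
  have t4 : killingForm ℂ L e ⁅b, d⁆ = 0 := step2 b hb d hd
  simp [lie_add, add_lie, t1, t2, t3, t4]
end

section
/- Let G be a group acting on a type M, let H₁, H₂ be subgroups of G, and let S₁, S₂ ⊆ M be subsets with h • S₁ = S₁ for all h ∈ H₁ and h • S₂ = S₂ for all h ∈ H₂. Let P := {(g₁, x₁, g₂, x₂) ∈ G × M × G × M | g₁ • x₁ ∈ S₁, x₂ ∈ S₂, x₁ = g₂ • x₂}, equipped with the H₁ × G × H₂-action (h₁, g, h₂) • (g₁, x₁, g₂, x₂) = (h₁g₁g⁻¹, g • x₁, gg₂h₂⁻¹, h₂ • x₂), and let Q := {(g, x) ∈ G × M | x ∈ S₂, g • x ∈ S₁}, equipped with the H₁ × H₂-action (h₁, h₂) • (g, x) = (h₁gh₂⁻¹, h₂ • x). Then the map (g₁, x₁, g₂, x₂) ↦ (g₁g₂,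 x₂) induces a well-defined bijection from the orbit set P/(H₁ × G × H₂) onto the orbit set Q/(H₁ × H₂). -/
open scoped Pointwise

variable {G M : Type*} [Group G] [MulAction G M]

/-- The set `P = {(g₁, x₁, g₂, x₂) ∣ g₁ • x₁ ∈ S₁, x₂ ∈ S₂, x₁ = g₂ • x₂}`. -/
def Pset (G : Type*) [Group G] [MulAction G M] (S₁ S₂ : Set M) : Set (G × M × G × M) :=
  {p | p.1 • p.2.1 ∈ S₁ ∧ p.2.2.2 ∈ S₂ ∧ p.2.1 = p.2.2.1 • p.2.2.2}

/-- The orbit relation of the `H₁ × G × H₂`-action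
`(h₁, g, h₂) • (g₁, x₁, g₂, x₂) = (h₁g₁g⁻¹, g • x₁, gg₂h₂⁻¹, h₂ • x₂)`. -/
def relP (H₁ H₂ : Subgroup G) (p q : G × M × G × M) : Prop :=
  ∃ h₁ ∈ H₁, ∃ g : G, ∃ h₂ ∈ H₂,
    q = (h₁ * p.1 * g⁻¹, g • p.2.1, g * p.2.2.1 * h₂⁻¹, h₂ • p.2.2.2)

/-- The set `Q = {(g, x) ∣ x ∈ S₂, g • x ∈ S₁}`. -/
def Qset (G : Type*) [Group G] [MulAction G M] (S₁ S₂ : Set M) : Set (G × M) :=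
  {q | q.2 ∈ S₂ ∧ q.1 • q.2 ∈ S₁}

/-- The orbit relation of the `H₁ × H₂`-action `(h₁, h₂) • (g, x) = (h₁gh₂⁻¹, h₂ • x)`. -/
def relQ (H₁ H₂ : Subgroup G) (q q' : G × M) : Prop :=
  ∃ h₁ ∈ H₁, ∃ h₂ ∈ H₂, q' = (h₁ * q.1 * h₂⁻¹, h₂ • q.2)

/-- The map `(g₁, x₁, g₂, x₂) ↦ (g₁g₂, x₂)`. -/
def descMap (G : Type*) (M : Type*) [Group G] : G × M × G × M → G × M :=
  fun p => (p.1 * p.2.2.1, p.2.2.2)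

/-! Acting by `g = g₂⁻¹` moves `(g₁, x₁, g₂, x₂) ∈ P` to `(g₁g₂, x₂, 1, x₂)`, and the `G`-factor
acts freely, so `descMap` identifies `P/G` with `Q`, compatibly with the remaining
`H₁ × H₂`-actions. Concretely, if `(g₁'g₂', x₂') = (h₁g₁g₂h₂⁻¹, h₂ • x₂)`, then the two points
of `P` are related by `(h₁, g₁'⁻¹h₁g₁, h₂)`. -/

theorem descMap_mem_Qset {S₁ S₂ : Set M} {p : G × M × G × M} (hp : p ∈ Pset G S₁ S₂) :
    descMap G M p ∈ Qset G S₁ S₂ := by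
  obtain ⟨hS₁, hS₂, hx₁⟩ := hp
  refine ⟨hS₂, ?_⟩
  simpa only [descMap, mul_smul, ← hx₁] using hS₁

theorem relQ_descMap_of_relP {H₁ H₂ : Subgroup G} {p p' : G × M × G × M}
    (h : relP H₁ H₂ p p') : relQ H₁ H₂ (descMap G M p) (descMap G M p') := by
  obtain ⟨h₁, hh₁, g, h₂, hh₂, rfl⟩ := h
  refine ⟨h₁, hh₁, h₂, hh₂, ?_⟩
  simp only [descMap, Prod.mk.injEq, and_true]
  group

theorem relP_of_relQ_descMap {H₁ H₂ : Subgroup G} {p p' : G × M × G × M}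
    (hp : p.2.1 = p.2.2.1 • p.2.2.2) (hp' : p'.2.1 = p'.2.2.1 • p'.2.2.2)
    (h : relQ H₁ H₂ (descMap G M p) (descMap G M p')) : relP H₁ H₂ p p' := by
  obtain ⟨g₁, x₁, g₂, x₂⟩ := p
  obtain ⟨g₁', x₁', g₂', x₂'⟩ := p'
  obtain ⟨h₁, hh₁, h₂, hh₂, heq⟩ := h
  simp only [descMap, Prod.mk.injEq] at heq hp hp'
  obtain ⟨hg, rfl⟩ := heq
  subst hp hp'
  obtain rfl : g₂' = g₁'⁻¹ * (h₁ * (g₁ * g₂) * h₂⁻¹) := eq_inv_mul_of_mul_eq hg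
  refine ⟨h₁, hh₁, g₁'⁻¹ * h₁ * g₁, h₂, hh₂, ?_⟩
  simp only [smul_smul, Prod.mk.injEq, and_true]
  refine ⟨?_, ?_, ?_⟩ <;> group

theorem exists_mem_Pset_descMap_eq {S₁ S₂ : Set M} {q : G × M} (hq : q ∈ Qset G S₁ S₂) :
    ∃ p ∈ Pset G S₁ S₂, descMap G M p = q :=
  ⟨(q.1, q.2, 1, q.2), ⟨hq.2, hq.1, (one_smul G q.2).symm⟩, by simp [descMap]⟩

theorem statement17_general (H₁ H₂ : Subgroup G) (S₁ S₂ : Set M) :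
    (∀ p ∈ Pset G S₁ S₂, descMap G M p ∈ Qset G S₁ S₂) ∧
    (∀ p ∈ Pset G S₁ S₂, ∀ p' ∈ Pset G S₁ S₂,
      relP H₁ H₂ p p' → relQ H₁ H₂ (descMap G M p) (descMap G M p')) ∧
    (∀ p ∈ Pset G S₁ S₂, ∀ p' ∈ Pset G S₁ S₂,
      relQ H₁ H₂ (descMap G M p) (descMap G M p') → relP H₁ H₂ p p') ∧
    (∀ q ∈ Qset G S₁ S₂, ∃ p ∈ Pset G S₁ S₂, descMap G M p = q) :=
  ⟨fun _ hp => descMap_mem_Qset hp,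
    fun _ _ _ _ => relQ_descMap_of_relP,
    fun _ hp _ hp' => relP_of_relQ_descMap hp.2.2 hp'.2.2,
    fun _ hq => exists_mem_Pset_descMap_eq hq⟩

/-- The map `(g₁, x₁, g₂, x₂) ↦ (g₁g₂, x₂)` induces a well-defined
bijection from the orbit set `P/(H₁ × G × H₂)` onto the orbit set `Q/(H₁ × H₂)`: it maps
`P` into `Q`, it is constant on `H₁ × G × H₂`-orbits up to the `H₁ × H₂`-orbit relation
(well-definedness), it separates orbits (injectivity), and every element of `Q` is hit
(surjectivity). -/
theorem statement17 (H₁ H₂ : Subgroup G) (S₁ S₂ : Set M)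
    (hS₁ : ∀ h ∈ H₁, h • S₁ = S₁) (hS₂ : ∀ h ∈ H₂, h • S₂ = S₂) :
    (∀ p ∈ Pset G S₁ S₂, descMap G M p ∈ Qset G S₁ S₂) ∧
    (∀ p ∈ Pset G S₁ S₂, ∀ p' ∈ Pset G S₁ S₂,
      relP H₁ H₂ p p' → relQ H₁ H₂ (descMap G M p) (descMap G M p')) ∧
    (∀ p ∈ Pset G S₁ S₂, ∀ p' ∈ Pset G S₁ S₂,
      relQ H₁ H₂ (descMap G M p) (descMap G M p') → relP H₁ H₂ p p') ∧
    (∀ q ∈ Qset G S₁ S₂, ∃ p ∈ Pset G S₁ S₂, descMap G M p = q) :=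
  statement17_general H₁ H₂ S₁ S₂
end
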